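/- arXiv:1606.03194 — 5 statements merged into one kernel-verified Lean document; each statement's English description precedes it below -/
import Mathlib

section
/- Let S be a commutative ring and n, d ∈ S with n·x + d·y = 1 for some x, y ∈ S. If n_c, d_c ∈ S satisfy n·d_c + d·n_c = 1, then there exists q ∈ S such that n_c = y + q·n and d_c = x − q·d. -/
theorem single_port_parametrization_converse
    {S : Type*} [CommRing S] (n d x y : S) (h : n * x + d * y = 1)
    (n_c d_c : S) (hc : n * d_c + d * n_c = 1) :
    ∃ q : S, n_c = y + q * n ∧ d_c = x - q * d := by
  refine ⟨x * n_c - y * d_c, ?_, ?_⟩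
  · linear_combination y * hc - n_c * h
  · linear_combination x * hc - d_c * h
end

section
/- Let S be an integral domain with fraction field F, and let n, d, x, y ∈ S with n·x + d·y = 1, d ≠ 0. For any q ∈ S with x − q·d ≠ 0, setting Y = n/d and Y_c = (y + q·n)/(x − q·d), one has (Y + Y_c)⁻¹ = d·(x − q·d) ∈ S. -/
theorem youla_family_stabilizes
    {S : Type*} [CommRing S] [IsDomain S] (n d x y : S)
    (h : n * x + d * y = 1) (hd : d ≠ 0) (q : S) (hxq : x - q * d ≠ 0) :
    (algebraMap S (FractionRing S) n / algebraMap S (FractionRing S) d +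
        algebraMap S (FractionRing S) (y + q * n) /
          algebraMap S (FractionRing S) (x - q * d))⁻¹ =
      algebraMap S (FractionRing S) (d * (x - q * d)) := by
  set f := algebraMap S (FractionRing S)
  have hi : Function.Injective f := IsFractionRing.injective S (FractionRing S)
  have hd' : f d ≠ 0 := fun hh => hd (hi (by simpa using hh))
  have hxq' : f (x - q * d) ≠ 0 := fun hh => hxq (hi (by simpa using hh))
  have h1 : f n * f (x - q * d) + f d * f (y + q * n) = 1 := by
    rw [← map_mul, ← map_mul, ← map_add, ← map_one f]
    congr 1
    linear_combination h
  rw [div_add_div _ _ hd' hxq', h1, map_mul, one_div, inv_inv]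
end

section
/- Let S be the ring of proper stable real rational functions. For any nonzero rational function T ∈ ℝ(s), there exist n, d ∈ S with d ≠ 0, T = n/d, and n·x + d·y = 1 for some x, y ∈ S; moreover if T is proper, d can be chosen with no zero at infinity. -/
/-!
Write `T = p / q` in lowest terms and let `m = max (deg p) (deg q)`. Dividing by the stable
polynomial `(s + 1)^m` turns `p` and `q` into proper stable functions. A Bézout identity
`a p + b q = 1`, multiplied by `(s + 1)^(2m)` and reduced modulo whichever of `p`, `q` has degree
`m`, yields cofactors of degree `≤ m`, which become proper stable after the same division. When `T`
is proper, `deg q = m`, so `d = q / (s + 1)^m` has no zero at infinity.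
-/

/-- `f` is a proper stable real rational function: no poles in the closed right
half-plane and no pole at infinity. -/
def ProperStable (f : RatFunc ℝ) : Prop :=
  (∀ z : ℂ, 0 ≤ z.re → Polynomial.eval z (f.denom.map (algebraMap ℝ ℂ)) ≠ 0) ∧
  f.num.degree ≤ f.denom.degree

open Polynomial

/-- All complex roots of `g` lie in the open left half-plane. -/
def IsHurwitz (g : ℝ[X]) : Prop :=
  ∀ z : ℂ, 0 ≤ z.re → eval z (g.map (algebraMap ℝ ℂ)) ≠ 0

namespace IsHurwitz

variable {g : ℝ[X]}

theorem ne_zero (hg : IsHurwitz g) : g ≠ 0 := by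
  rintro rfl
  exact hg 0 le_rfl (by simp)

theorem of_dvd {h : ℝ[X]} (hg : IsHurwitz g) (hhg : h ∣ g) : IsHurwitz h := by
  intro z hz hroot
  obtain ⟨k, rfl⟩ := hhg
  exact hg z hz (by simp [hroot])

theorem pow (hg : IsHurwitz g) (k : ℕ) : IsHurwitz (g ^ k) := fun z hz => by
  simpa using pow_ne_zero k (hg z hz)

end IsHurwitz

theorem isHurwitz_X_add_C {a : ℝ} (ha : 0 < a) : IsHurwitz (X + C a) := by
  intro z hz hroot
  have hre := congrArg Complex.re hroot
  simp only [Polynomial.map_add, map_X, map_C, Complex.coe_algebraMap, eval_add, eval_X, eval_C,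
    Complex.add_re, Complex.ofReal_re, Complex.zero_re] at hre
  linarith

namespace RatFunc

variable {K : Type*} [Field K] {c g : K[X]}

theorem degree_num_div_add_degree (hg : g ≠ 0) :
    (algebraMap K[X] (RatFunc K) c / algebraMap _ _ g).num.degree + g.degree =
      c.degree + (algebraMap K[X] (RatFunc K) c / algebraMap _ _ g).denom.degree := by
  rw [← degree_mul, ← degree_mul, (num_mul_eq_mul_denom_iff hg).mpr rfl]

theorem degree_num_div_le_degree_denom_iff (hg : g ≠ 0) :
    (algebraMap K[X] (RatFunc K) c / algebraMap _ _ g).num.degree ≤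
      (algebraMap K[X] (RatFunc K) c / algebraMap _ _ g).denom.degree ↔ c.degree ≤ g.degree := by
  have hdenom := (algebraMap K[X] (RatFunc K) c / algebraMap _ _ g).denom_ne_zero
  rw [← WithBot.add_le_add_iff_right (degree_ne_bot.mpr hg), degree_num_div_add_degree hg,
    add_comm _ g.degree, WithBot.add_le_add_iff_right (degree_ne_bot.mpr hdenom)]

theorem degree_num_div_eq_degree_denom_iff (hg : g ≠ 0) :
    (algebraMap K[X] (RatFunc K) c / algebraMap _ _ g).num.degree =
      (algebraMap K[X] (RatFunc K) c / algebraMap _ _ g).denom.degree ↔ c.degree = g.degree := by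
  have hdenom := (algebraMap K[X] (RatFunc K) c / algebraMap _ _ g).denom_ne_zero
  rw [← WithBot.add_right_inj (degree_ne_bot.mpr hg), degree_num_div_add_degree hg,
    add_comm _ g.degree, WithBot.add_right_inj (degree_ne_bot.mpr hdenom)]

end RatFunc

theorem properStable_div {c g : ℝ[X]} (hg : IsHurwitz g) (hdeg : c.degree ≤ g.degree) :
    ProperStable (algebraMap ℝ[X] (RatFunc ℝ) c / algebraMap _ _ g) :=
  ⟨hg.of_dvd (RatFunc.denom_div_dvd c g),
    (RatFunc.degree_num_div_le_degree_denom_iff hg.ne_zero).mpr hdeg⟩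

section Bezout

variable {K : Type*} [Field K] {p q : K[X]}

theorem IsCoprime.exists_mul_add_mul_eq_of_natDegree_le (hpq : IsCoprime p q) (hq : q ≠ 0)
    (hdeg : p.natDegree ≤ q.natDegree) {w : K[X]} (hw : w.natDegree ≤ 2 * q.natDegree) :
    ∃ r e : K[X], p * r + q * e = w ∧ r.natDegree ≤ q.natDegree ∧ e.natDegree ≤ q.natDegree := by
  obtain ⟨a, b, hab⟩ := hpq
  set r := a * w % q
  set e := b * w + p * (a * w / q)
  have hsum : p * r + q * e = w := by
    linear_combination w * hab + p * EuclideanDomain.div_add_mod (a * w) q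
  have hr : r.natDegree ≤ q.natDegree :=
    natDegree_le_natDegree (EuclideanDomain.mod_lt _ hq).le
  refine ⟨r, e, hsum, hr, ?_⟩
  have hqe : (q * e).natDegree ≤ 2 * q.natDegree := by
    rw [← sub_eq_of_eq_add' hsum.symm]
    refine (natDegree_sub_le _ _).trans (max_le hw ?_)
    exact natDegree_mul_le.trans (by omega)
  rcases eq_or_ne e 0 with he | he
  · simp [he]
  · rw [natDegree_mul hq he] at hqe
    omega

theorem IsCoprime.exists_mul_add_mul_eq_of_natDegree_le_max (hpq : IsCoprime p q) (hq : q ≠ 0)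
    {w : K[X]} (hw : w.natDegree ≤ 2 * max p.natDegree q.natDegree) :
    ∃ r e : K[X], p * r + q * e = w ∧ r.natDegree ≤ max p.natDegree q.natDegree ∧
      e.natDegree ≤ max p.natDegree q.natDegree := by
  rcases le_or_gt p.natDegree q.natDegree with hle | hlt
  · rw [max_eq_right hle] at hw ⊢
    exact hpq.exists_mul_add_mul_eq_of_natDegree_le hq hle hw
  · have hp : p ≠ 0 := by rintro rfl; simp at hlt
    rw [max_eq_left hlt.le] at hw ⊢
    obtain ⟨r, e, hsum, hr, he⟩ := hpq.symm.exists_mul_add_mul_eq_of_natDegree_le hp hlt.le hw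
    exact ⟨e, r, by rw [← hsum, add_comm], he, hr⟩

end Bezout

theorem coprime_fraction_exists_general (T : RatFunc ℝ) :
    ∃ n d x y : RatFunc ℝ, ProperStable n ∧ ProperStable d ∧ ProperStable x ∧
      ProperStable y ∧ d ≠ 0 ∧ T = n / d ∧ n * x + d * y = 1 ∧
      (T.num.degree ≤ T.denom.degree → d.num.degree = d.denom.degree) := by
  set p := T.num
  set q := T.denom
  set m := max p.natDegree q.natDegree
  set g : ℝ[X] := (X + C 1) ^ m
  have hg : IsHurwitz g := (isHurwitz_X_add_C one_pos).pow m
  have hgdeg : g.degree = m := by simp only [g, degree_pow, degree_X_add_C, nsmul_eq_mul, mul_one]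
  have hle_g {c : ℝ[X]} (hc : c.natDegree ≤ m) : c.degree ≤ g.degree :=
    hgdeg ▸ degree_le_of_natDegree_le hc
  obtain ⟨r, e, hsum, hr, he⟩ := T.isCoprime_num_denom.exists_mul_add_mul_eq_of_natDegree_le_max
    T.denom_ne_zero (w := g ^ 2) (by rw [natDegree_pow, natDegree_eq_of_degree_eq_some hgdeg])
  set ι := algebraMap ℝ[X] (RatFunc ℝ)
  have hιg : ι g ≠ 0 := RatFunc.algebraMap_ne_zero hg.ne_zero
  refine ⟨ι p / ι g, ι q / ι g, ι r / ι g, ι e / ι g, properStable_div hg (hle_g (le_max_left ..)),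
    properStable_div hg (hle_g (le_max_right ..)), properStable_div hg (hle_g hr),
    properStable_div hg (hle_g he), div_ne_zero (RatFunc.algebraMap_ne_zero T.denom_ne_zero) hιg,
    ?_, ?_, fun hpq => ?_⟩
  · rw [div_div_div_cancel_right₀ hιg, RatFunc.num_div_denom]
  · field_simp
    rw [← map_mul, ← map_mul, ← map_add, hsum, map_pow]
  · rw [RatFunc.degree_num_div_eq_degree_denom_iff hg.ne_zero, hgdeg,
      show m = q.natDegree from max_eq_right (natDegree_le_natDegree hpq)]
    exact degree_eq_natDegree T.denom_ne_zero

theorem coprime_fraction_exists (T : RatFunc ℝ) (hT : T ≠ 0) :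
    ∃ n d x y : RatFunc ℝ, ProperStable n ∧ ProperStable d ∧ ProperStable x ∧
      ProperStable y ∧ d ≠ 0 ∧ T = n / d ∧ n * x + d * y = 1 ∧
      (T.num.degree ≤ T.denom.degree → d.num.degree = d.denom.degree) :=
  coprime_fraction_exists_general T
end

section
/- Let S be a commutative ring with matrices satisfying the doubly coprime identity [[X_l, Y_l],[D_l, −N_l]]·[[N_r, Y_r],[D_r, −X_r]] = I. Then for every matrix Q over S of appropriate size, the block matrices obtained by replacing (X_l, Y_l) with (X_l − Q·D_l, Y_l + Q·N_l) and (Y_r, X_r) with (Y_r + N_r·Q, X_r − D_r·Q) again satisfy the doubly coprime identity. -/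
theorem youla_parametrized_doubly_coprime
    {S : Type*} [CommRing S] {m : Type*} [Fintype m] [DecidableEq m]
    (N_r D_r N_l D_l X_l Y_l X_r Y_r Q : Matrix m m S)
    (h : Matrix.fromBlocks X_l Y_l D_l (-N_l) *
          Matrix.fromBlocks N_r Y_r D_r (-X_r) = 1) :
    Matrix.fromBlocks (X_l - Q * D_l) (Y_l + Q * N_l) D_l (-N_l) *
      Matrix.fromBlocks N_r (Y_r + N_r * Q) D_r (-(X_r - D_r * Q)) = 1 := by
  have hL : Matrix.fromBlocks (X_l - Q * D_l) (Y_l + Q * N_l) D_l (-N_l) =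
      Matrix.fromBlocks 1 (-Q) 0 1 * Matrix.fromBlocks X_l Y_l D_l (-N_l) := by
    rw [Matrix.fromBlocks_multiply]
    simp [sub_eq_add_neg, add_comm]
  have hR : Matrix.fromBlocks N_r (Y_r + N_r * Q) D_r (-(X_r - D_r * Q)) =
      Matrix.fromBlocks N_r Y_r D_r (-X_r) * Matrix.fromBlocks 1 Q 0 1 := by
    rw [Matrix.fromBlocks_multiply]
    simp [sub_eq_add_neg, add_comm]
  rw [hL, hR, mul_assoc, ← mul_assoc (Matrix.fromBlocks X_l Y_l D_l (-N_l)), h,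
    one_mul, Matrix.fromBlocks_multiply]
  simp
end

section
/- Let S be an integral domain with fraction field F, and suppose matrices over S satisfy N_{cl}·D_r + D_{cl}·N_r = I and D_r, D_{cl} invertible over F. Then with T = N_r·D_r⁻¹ and T_c = D_{cl}⁻¹·N_{cl} (assuming T, T_c invertible over F), the interconnection matrix (T⁻¹ + T_c⁻¹)⁻¹ equals N_r·N_{cl}, hence has all entries in S. -/
theorem normalized_interconnection_is_stable
    {S : Type*} [CommRing S] [IsDomain S] {m : Type*} [Fintype m] [DecidableEq m]
    (N_r D_r N_cl D_cl : Matrix m m (FractionRing S))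
    (hNrS : ∀ i j, N_r i j ∈ Set.range (algebraMap S (FractionRing S)))
    (hDrS : ∀ i j, D_r i j ∈ Set.range (algebraMap S (FractionRing S)))
    (hNclS : ∀ i j, N_cl i j ∈ Set.range (algebraMap S (FractionRing S)))
    (hDclS : ∀ i j, D_cl i j ∈ Set.range (algebraMap S (FractionRing S)))
    (hbez : N_cl * D_r + D_cl * N_r = 1)
    (hDr : IsUnit D_r.det) (hDcl : IsUnit D_cl.det)
    (T T_c : Matrix m m (FractionRing S))
    (hT : T = N_r * D_r⁻¹) (hTc : T_c = D_cl⁻¹ * N_cl)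
    (hTu : IsUnit T.det) (hTcu : IsUnit T_c.det) :
    (T⁻¹ + T_c⁻¹)⁻¹ = N_r * N_cl ∧
      ∀ i j, (N_r * N_cl) i j ∈ Set.range (algebraMap S (FractionRing S)) := by
  have hNr : N_r = T * D_r := by
    rw [hT, Matrix.mul_assoc, Matrix.nonsing_inv_mul _ hDr, Matrix.mul_one]
  have hNcl : N_cl = D_cl * T_c := by
    rw [hTc, ← Matrix.mul_assoc, Matrix.mul_nonsing_inv _ hDcl, Matrix.one_mul]
  have hNru : IsUnit N_r.det := by
    rw [hNr, Matrix.det_mul]; exact hTu.mul hDr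
  have hNclu : IsUnit N_cl.det := by
    rw [hNcl, Matrix.det_mul]; exact hDcl.mul hTcu
  have hTi : T⁻¹ = D_r * N_r⁻¹ := by
    rw [hT, Matrix.mul_inv_rev, Matrix.nonsing_inv_nonsing_inv _ hDr]
  have hTci : T_c⁻¹ = N_cl⁻¹ * D_cl := by
    rw [hTc, Matrix.mul_inv_rev, Matrix.nonsing_inv_nonsing_inv _ hDcl]
  have hsum : T⁻¹ + T_c⁻¹ = N_cl⁻¹ * N_r⁻¹ := by
    rw [hTi, hTci]
    have h1 : N_cl⁻¹ * N_r⁻¹ = N_cl⁻¹ * (N_cl * D_r + D_cl * N_r) * N_r⁻¹ := by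
      rw [hbez, Matrix.mul_one]
    rw [h1, Matrix.mul_add, Matrix.add_mul, ← Matrix.mul_assoc N_cl⁻¹ N_cl,
      Matrix.nonsing_inv_mul _ hNclu, Matrix.one_mul,
      ← Matrix.mul_assoc N_cl⁻¹ D_cl,
      Matrix.mul_assoc (N_cl⁻¹ * D_cl), Matrix.mul_nonsing_inv _ hNru,
      Matrix.mul_one, add_comm]
  constructor
  · rw [hsum, Matrix.mul_inv_rev, Matrix.nonsing_inv_nonsing_inv _ hNru,
      Matrix.nonsing_inv_nonsing_inv _ hNclu]
  · intro i j
    have : (N_r * N_cl) i j ∈ (algebraMap S (FractionRing S)).range := by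
      rw [Matrix.mul_apply]
      exact Subring.sum_mem _ (fun k _ => Subring.mul_mem _ (hNrS i k) (hNclS k j))
    exact this
end
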